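/- Let G be a connected bipartite graph with bipartition (X, Y) and no sibling pairs, with |X| ≥ 2 and |Y| ≥ 2. Let r ∈ X, let T : X \ {r} → X, and for each x ∈ X \ {r} let y_x ∈ Y be such that (x, y_x) and (T(x), y_x) are edges of G, and suppose every edge of G belongs to at most two of the sets {(x, y_x), (T(x), y_x)} over x ∈ X \ {r}. Let (f_X, f_Y) be a two-layer drawing of G with at most k crossings, and for x ∈ X \ {r} define g(x) = |f_X(x) − f_X(T(x))| − 1. Then (1/4) · Σ_{x ∈ X \ {r}} (g(x) − 1) ≤ k, i.e., Σ_{x ∈ X \ {r}} (g(x) − 1) ≤ 4k. -/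

import Mathlib

open Finset

variable {X Y : Type} [Fintype X] [Fintype Y] [DecidableEq X] [DecidableEq Y]

/-- The adjacency relation on `X ⊕ Y` induced by an edge set `E ⊆ X × Y`. -/
def biAdj (E : Finset (X × Y)) : X ⊕ Y → X ⊕ Y → Prop
  | Sum.inl x, Sum.inr y => (x, y) ∈ E
  | Sum.inr y, Sum.inl x => (x, y) ∈ E
  | _, _ => False

/-- The bipartite graph with parts `X`, `Y` and edge set `E`, as a simple graph on `X ⊕ Y`. -/
def biGraph (E : Finset (X × Y)) : SimpleGraph (X ⊕ Y) where
  Adj := biAdj E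
  symm := by constructor; rintro (x | y) (x' | y') h <;> simp_all [biAdj]
  loopless := by constructor; rintro (x | y) h <;> simp_all [biAdj]

instance (E : Finset (X × Y)) : DecidableRel (biGraph E).Adj := fun u v =>
  match u, v with
  | Sum.inl x, Sum.inr y => (inferInstance : Decidable ((x, y) ∈ E))
  | Sum.inr y, Sum.inl x => (inferInstance : Decidable ((x, y) ∈ E))
  | Sum.inl _, Sum.inl _ => .isFalse (by simp [biGraph, biAdj])
  | Sum.inr _, Sum.inr _ => .isFalse (by simp [biGraph, biAdj])

/-- The crossing number of the two-layer drawing `(fX, fY)` of the bipartite graph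
with edge set `E`: the number of pairs of edges `(x, y)`, `(x', y')` with
`fX x < fX x'` and `fY y' < fY y`. -/
def crossNum (E : Finset (X × Y)) (fX : X ≃ Fin (Fintype.card X))
    (fY : Y ≃ Fin (Fintype.card Y)) : ℕ :=
  ((E ×ˢ E).filter fun p => fX p.1.1 < fX p.2.1 ∧ fY p.2.2 < fY p.1.2).card

/-- A leaf is a vertex of degree one. -/
def IsLeaf (E : Finset (X × Y)) (v : X ⊕ Y) : Prop := (biGraph E).degree v = 1

/-- `G` has no sibling pairs: no two distinct leaves have a common neighbor. -/
def NoSiblingPairs (E : Finset (X × Y)) : Prop :=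
  ∀ u v : X ⊕ Y, u ≠ v → IsLeaf E u → IsLeaf E v →
    ∀ w, ¬ ((biGraph E).Adj u w ∧ (biGraph E).Adj v w)

/-- The bipartite crossing number: the minimum crossing number over all two-layer drawings. -/
noncomputable def bcr (E : Finset (X × Y)) : ℕ :=
  sInf {k | ∃ fX fY, crossNum E fX fY = k}

/-!
For `x ≠ r`, at least `g x` vertices are placed strictly between `x` and `T x`. At most one of
them has `y_x` as its only neighbour, since two such vertices would be sibling leaves (and
connectivity rules out isolated vertices). Every other such vertex `z` has an edge `(z, y)` with
`y ≠ y_x`, and that edge crosses one of the two edges of the path `x – y_x – T x`, depending on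
which side of `y_x` the vertex `y` lies. Charge the pair `(x, z)` to this crossing. A crossing
receives at most four charges: each of its two edges lies on at most two paths, and the other
edge then determines `z`.
-/

section Layout

variable {α : Type*} {n : ℕ}

def layoutBetween (e : α ≃ Fin n) (a b : α) : Finset α :=
  (Ioo (min (e a) (e b)) (max (e a) (e b))).map e.symm.toEmbedding

theorem mem_layoutBetween {e : α ≃ Fin n} {a b z : α} :
    z ∈ layoutBetween e a b ↔ min (e a) (e b) < e z ∧ e z < max (e a) (e b) := by
  simp [layoutBetween, Finset.mem_map_equiv]

theorem abs_sub_sub_one_le_card_layoutBetween (e : α ≃ Fin n) (a b : α) :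
    |(e a : ℤ) - (e b : ℤ)| - 1 ≤ #(layoutBetween e a b) := by
  rw [layoutBetween, card_map, Fin.card_Ioo, sub_le_iff_le_add, abs_sub_le_iff]
  simp only [Fin.coe_min, Fin.coe_max]
  omega

end Layout

section Leaves

variable {α β : Type} {E : Finset (α × β)}

theorem exists_mem_of_connected (hconn : (biGraph E).Connected) (z : α) (m : β) :
    ∃ y, (z, y) ∈ E := by
  obtain ⟨w | y, hw⟩ :=
    (hconn.preconnected (Sum.inl z) (Sum.inr m)).nonempty_neighborSet_left Sum.inl_ne_inr
  · exact hw.elim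
  · exact ⟨y, hw⟩

theorem isLeaf_of_forall_mem_eq [Fintype α] [Fintype β] [DecidableEq α] [DecidableEq β]
    {z : α} {m : β} (hzm : (z, m) ∈ E)
    (hz : ∀ y, (z, y) ∈ E → y = m) : IsLeaf E (Sum.inl z) := by
  have hnbr : (biGraph E).neighborFinset (Sum.inl z) = {Sum.inr m} := by
    ext (x | y)
    · simp only [SimpleGraph.mem_neighborFinset, mem_singleton, reduceCtorEq, iff_false]
      exact id
    · simp only [SimpleGraph.mem_neighborFinset, mem_singleton, Sum.inr.injEq]
      exact ⟨hz y, by rintro rfl; exact hzm⟩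
  rw [IsLeaf, ← SimpleGraph.card_neighborFinset_eq_degree, hnbr, card_singleton]

theorem NoSiblingPairs.eq_of_forall_mem_eq [Fintype α] [Fintype β] [DecidableEq α] [DecidableEq β]
    (hconn : (biGraph E).Connected)
    (hns : NoSiblingPairs E) {m : β} {z z' : α} (hz : ∀ y, (z, y) ∈ E → y = m)
    (hz' : ∀ y, (z', y) ∈ E → y = m) : z = z' := by
  have mem_of_forall {w : α} (hw : ∀ y, (w, y) ∈ E → y = m) : (w, m) ∈ E := by
    obtain ⟨y, hy⟩ := exists_mem_of_connected hconn w m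
    rwa [← hw y hy]
  by_contra hne
  exact hns _ _ (Sum.inl_injective.ne hne) (isLeaf_of_forall_mem_eq (mem_of_forall hz) hz)
    (isLeaf_of_forall_mem_eq (mem_of_forall hz') hz') (Sum.inr m)
    ⟨mem_of_forall hz, mem_of_forall hz'⟩

theorem card_le_card_filter_exists_ne_add_one [Fintype α] [Fintype β] [DecidableEq α]
    [DecidableEq β] (hconn : (biGraph E).Connected)
    (hns : NoSiblingPairs E) (m : β) (s : Finset α) :
    #s ≤ #(s.filter fun z => ∃ y, (z, y) ∈ E ∧ y ≠ m) + 1 := by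
  rw [← card_filter_add_card_filter_not (s := s) (fun z => ∃ y, (z, y) ∈ E ∧ y ≠ m)]
  gcongr
  refine card_le_one.2 fun z hz z' hz' => ?_
  simp only [mem_filter, not_exists, not_and, not_not] at hz hz'
  exact hns.eq_of_forall_mem_eq hconn hz.2 hz'.2

end Leaves

section Crossings

variable {α β : Type} [Fintype α] [Fintype β] (E : Finset (α × β))
  (fX : α ≃ Fin (Fintype.card α)) (fY : β ≃ Fin (Fintype.card β))

def crossings : Finset ((α × β) × (α × β)) :=
  (E ×ˢ E).filter fun p => fX p.1.1 < fX p.2.1 ∧ fY p.2.2 < fY p.1.2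

theorem card_crossings : #(crossings E fX fY) = crossNum E fX fY := rfl

variable {E fX fY}

theorem mem_crossings {c : (α × β) × (α × β)} :
    c ∈ crossings E fX fY ↔ c.1 ∈ E ∧ c.2 ∈ E ∧ fX c.1.1 < fX c.2.1 ∧ fY c.2.2 < fY c.1.2 := by
  simp [crossings, and_assoc]

end Crossings

section PathSystem

variable {α β ι : Type} [DecidableEq α] [DecidableEq β] (a b : ι → α) (m : ι → β)

def pathEdges (i : ι) : Finset (α × β) := {(a i, m i), (b i, m i)}

/-- The pair `⟨i, z⟩` is charged to the crossing `c` when one edge of `c` lies on the path `i` and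
the other edge leaves `z`. -/
def Charges (p : Σ _ : ι, α) (c : (α × β) × (α × β)) : Prop :=
  (c.1 ∈ pathEdges a b m p.1 ∧ c.2.1 = p.2) ∨ (c.2 ∈ pathEdges a b m p.1 ∧ c.1.1 = p.2)

instance (p : Σ _ : ι, α) (c : (α × β) × (α × β)) : Decidable (Charges a b m p c) := by
  unfold Charges; infer_instance

variable [Fintype α] [Fintype β] {E : Finset (α × β)}
  {fX : α ≃ Fin (Fintype.card α)} {fY : β ≃ Fin (Fintype.card β)} {a b m}

theorem exists_charges (hpath : ∀ i, (a i, m i) ∈ E ∧ (b i, m i) ∈ E) {i : ι} {z : α} {y : β}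
    (hz : z ∈ layoutBetween fX (a i) (b i)) (hzy : (z, y) ∈ E) (hy : y ≠ m i) :
    ∃ c ∈ crossings E fX fY, Charges a b m ⟨i, z⟩ c := by
  rw [mem_layoutBetween, min_lt_iff, lt_max_iff] at hz
  obtain ⟨ha, hb⟩ := hpath i
  have hai : (a i, m i) ∈ pathEdges a b m i := by simp [pathEdges]
  have hbi : (b i, m i) ∈ pathEdges a b m i := by simp [pathEdges]
  rcases lt_or_gt_of_ne (fY.injective.ne hy) with hy | hy
  · rcases hz.1 with h | h
    · exact ⟨((a i, m i), (z, y)), mem_crossings.2 ⟨ha, hzy, h, hy⟩, .inl ⟨hai, rfl⟩⟩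
    · exact ⟨((b i, m i), (z, y)), mem_crossings.2 ⟨hb, hzy, h, hy⟩, .inl ⟨hbi, rfl⟩⟩
  · rcases hz.2 with h | h
    · exact ⟨((z, y), (a i, m i)), mem_crossings.2 ⟨hzy, ha, h, hy⟩, .inr ⟨hai, rfl⟩⟩
    · exact ⟨((z, y), (b i, m i)), mem_crossings.2 ⟨hzy, hb, h, hy⟩, .inr ⟨hbi, rfl⟩⟩

variable [Fintype ι]

theorem card_filter_charges_le
    (hmult : ∀ e ∈ E, #(univ.filter fun i => e ∈ pathEdges a b m i) ≤ 2)
    (s : Finset (Σ _ : ι, α)) {c : (α × β) × (α × β)} (hc : c ∈ crossings E fX fY) :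
    #(s.filter (Charges a b m · c)) ≤ 4 := by
  classical
  set F₁ := univ.filter fun i => c.1 ∈ pathEdges a b m i
  set F₂ := univ.filter fun i => c.2 ∈ pathEdges a b m i
  calc #(s.filter (Charges a b m · c))
      ≤ #(F₁.image (fun i => (⟨i, c.2.1⟩ : Σ _ : ι, α)) ∪ F₂.image (fun i => ⟨i, c.1.1⟩)) := by
        refine card_le_card fun ⟨i, z⟩ h => ?_
        rcases (mem_filter.1 h).2 with ⟨hi, rfl⟩ | ⟨hi, rfl⟩
        · exact mem_union_left _ (mem_image_of_mem _ (mem_filter.2 ⟨mem_univ _, hi⟩))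
        · exact mem_union_right _ (mem_image_of_mem _ (mem_filter.2 ⟨mem_univ _, hi⟩))
    _ ≤ #F₁ + #F₂ := (card_union_le _ _).trans (add_le_add card_image_le card_image_le)
    _ ≤ 2 + 2 := add_le_add (hmult _ (mem_crossings.1 hc).1) (hmult _ (mem_crossings.1 hc).2.1)

theorem sum_card_filter_layoutBetween_le (hpath : ∀ i, (a i, m i) ∈ E ∧ (b i, m i) ∈ E)
    (hmult : ∀ e ∈ E, #(univ.filter fun i => e ∈ pathEdges a b m i) ≤ 2) :
    ∑ i, #((layoutBetween fX (a i) (b i)).filter fun z => ∃ y, (z, y) ∈ E ∧ y ≠ m i) ≤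
      4 * crossNum E fX fY := by
  rw [← card_sigma, ← card_crossings, mul_comm]
  refine (mul_one _).symm.le.trans (card_mul_le_card_mul (Charges a b m) ?_
    fun c hc => card_filter_charges_le hmult _ hc)
  rintro ⟨i, z⟩ hp
  obtain ⟨-, hz, y, hzy, hy⟩ := by simpa only [mem_sigma, mem_filter] using hp
  obtain ⟨c, hc, hch⟩ := exists_charges hpath hz hzy hy
  exact card_pos.2 ⟨c, mem_filter.2 ⟨hc, hch⟩⟩

end PathSystem

theorem sum_gap_bound_general (X Y : Type) [Fintype X] [Fintype Y]
    [DecidableEq X] [DecidableEq Y] (E : Finset (X × Y))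
    (hconn : (biGraph E).Connected) (hns : NoSiblingPairs E)
    (r : X) (T : {x : X // x ≠ r} → X) (yp : {x : X // x ≠ r} → Y)
    (hpath : ∀ x : {x : X // x ≠ r}, (x.1, yp x) ∈ E ∧ (T x, yp x) ∈ E)
    (hmult : ∀ e ∈ E,
      (Finset.univ.filter fun x : {x : X // x ≠ r} =>
        e = (x.1, yp x) ∨ e = (T x, yp x)).card ≤ 2)
    (fX : X ≃ Fin (Fintype.card X)) (fY : Y ≃ Fin (Fintype.card Y))
    (k : ℕ) (hk : crossNum E fX fY ≤ k) :
    ∑ x : {x : X // x ≠ r},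
        ((|(fX x.1 : ℤ) - (fX (T x) : ℤ)| - 1) - 1) ≤ 4 * (k : ℤ) := by
  have hgap (x : {x : X // x ≠ r}) : (|(fX x.1 : ℤ) - (fX (T x) : ℤ)| - 1) - 1 ≤
      #((layoutBetween fX x.1 (T x)).filter fun z => ∃ y, (z, y) ∈ E ∧ y ≠ yp x) := by
    have hbetween := abs_sub_sub_one_le_card_layoutBetween fX x.1 (T x)
    have hgood := card_le_card_filter_exists_ne_add_one hconn hns (yp x)
      (layoutBetween fX x.1 (T x))
    omega
  have hcount := sum_card_filter_layoutBetween_le (fX := fX) (fY := fY) hpath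
    (by simpa only [pathEdges, mem_insert, mem_singleton] using hmult)
  calc _ ≤ ∑ x : {x : X // x ≠ r},
        (#((layoutBetween fX x.1 (T x)).filter fun z => ∃ y, (z, y) ∈ E ∧ y ≠ yp x) : ℤ) :=
        sum_le_sum fun x _ => hgap x
    _ ≤ 4 * (k : ℤ) := by exact_mod_cast hcount.trans (by omega)

/-- If `G` is connected with no sibling pairs and `|X|, |Y| ≥ 2`, `T` and the midpoints
`y_x` give paths `P_x` of length two with each edge on at most two of them, and the
drawing `(fX, fY)` has at most `k` crossings, then with
`g x = |fX x - fX (T x)| - 1` we have `∑ (g x - 1) ≤ 4k`. -/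
theorem sum_gap_bound (X Y : Type) [Fintype X] [Fintype Y]
    [DecidableEq X] [DecidableEq Y] (E : Finset (X × Y))
    (hconn : (biGraph E).Connected) (hns : NoSiblingPairs E)
    (hX : 2 ≤ Fintype.card X) (hY : 2 ≤ Fintype.card Y)
    (r : X) (T : {x : X // x ≠ r} → X) (yp : {x : X // x ≠ r} → Y)
    (hpath : ∀ x : {x : X // x ≠ r}, (x.1, yp x) ∈ E ∧ (T x, yp x) ∈ E)
    (hmult : ∀ e ∈ E,
      (Finset.univ.filter fun x : {x : X // x ≠ r} =>
        e = (x.1, yp x) ∨ e = (T x, yp x)).card ≤ 2)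
    (fX : X ≃ Fin (Fintype.card X)) (fY : Y ≃ Fin (Fintype.card Y))
    (k : ℕ) (hk : crossNum E fX fY ≤ k) :
    ∑ x : {x : X // x ≠ r},
        ((|(fX x.1 : ℤ) - (fX (T x) : ℤ)| - 1) - 1) ≤ 4 * (k : ℤ) :=
  sum_gap_bound_general X Y E hconn hns r T yp hpath hmult fX fY k hk
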